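/- arXiv:0901.3623 — 5 statements merged into one kernel-verified Lean document; each statement's English description precedes it below -/
import Mathlib

section
/- Let X be a Banach space, k ∈ ℕ ∪ {∞}, and let h : X → ℓ∞(Γ) be a continuous map which is coordinatewise C^k-smooth. Let f : ℓ∞(Γ) → ℝ be a C^k-Fréchet smooth function which locally depends on finitely many coordinates at every point of ℓ∞(Γ). Then the composition f ∘ h : X → ℝ is C^k-Fréchet smooth. -/
/-!
Near a point `c`, `f` depends only on the coordinates in some finite set `M`, so it agrees with
`y ↦ f (s (y|_M))`, where `s` is the affine map overwriting the `M`-coordinates of `c`. Along `h`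
this gives, locally, `f ∘ h = f ∘ s ∘ (h|_M)`; here `h|_M` takes values in the finite-dimensional
space `ℝ^M`, so it is `C^k` as soon as each coordinate of `h` is.
-/

open Filter Topology
open scoped ENNReal

/-- `f` locally depends on finitely many coordinates at `x`: on some neighborhood of `x`,
`f` factors through the restriction to a finite set of coordinates. -/
def LFCAt {Γ : Type*} (f : lp (fun _ : Γ => ℝ) ∞ → ℝ) (x : lp (fun _ : Γ => ℝ) ∞) : Prop :=
  ∃ U ∈ 𝓝 x, ∃ M : Finset Γ, ∃ g : (M → ℝ) → ℝ, ∀ y ∈ U, f y = g fun γ => y ↑γ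

namespace lp

variable {Γ : Type*} [DecidableEq Γ] {E : Γ → Type*} [∀ γ, NormedAddCommGroup (E γ)]
  {p : ℝ≥0∞}

noncomputable def updateFinset (c : lp E p) (M : Finset Γ) (v : ∀ γ : M, E γ) : lp E p :=
  c + ∑ γ : M, lp.single p (γ : Γ) (v γ - c γ)

theorem updateFinset_apply_mem (c : lp E p) (M : Finset Γ) (v : ∀ γ : M, E γ) (γ : M) :
    updateFinset c M v γ = v γ := by
  have hsum : (∑ δ : M, lp.single p (δ : Γ) (v δ - c δ)) (γ : Γ) = v γ - c γ := by
    rw [lp.coeFn_sum, Finset.sum_apply, Finset.sum_eq_single γ]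
    · exact lp.single_apply_self _ _ _
    · exact fun δ _ hδ => lp.single_apply_ne _ _ _ fun h => hδ (Subtype.ext h).symm
    · exact fun h => absurd (Finset.mem_univ γ) h
  rw [updateFinset, lp.coeFn_add, Pi.add_apply, hsum, add_sub_cancel]

theorem updateFinset_self (c : lp E p) (M : Finset Γ) :
    updateFinset c M (fun γ : M => c γ) = c := by
  simp [updateFinset, lp.single_zero]

theorem contDiff_updateFinset {𝕜 : Type*} [NontriviallyNormedField 𝕜]
    [∀ γ, NormedSpace 𝕜 (E γ)] [Fact (1 ≤ p)] (c : lp E p) (M : Finset Γ) {n : WithTop ℕ∞} :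
    ContDiff 𝕜 n (updateFinset c M) :=
  contDiff_const.add <| ContDiff.sum fun γ _ =>
    (lp.singleContinuousLinearMap 𝕜 E p γ).contDiff.comp
      ((ContinuousLinearMap.proj (R := 𝕜) (φ := fun δ : M => E δ) γ).contDiff.sub contDiff_const)

end lp

theorem LFCAt.exists_eventuallyEq_comp_updateFinset {Γ : Type*} [DecidableEq Γ]
    {f : lp (fun _ : Γ => ℝ) ∞ → ℝ} {c : lp (fun _ : Γ => ℝ) ∞} (hf : LFCAt f c) :
    ∃ M : Finset Γ, f =ᶠ[𝓝 c] fun y => f (lp.updateFinset c M fun γ : M => y γ) := by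
  obtain ⟨U, hU, M, g, hg⟩ := hf
  have hcont : Continuous fun y : lp (fun _ : Γ => ℝ) ∞ => lp.updateFinset c M fun γ : M => y γ :=
    (lp.contDiff_updateFinset (𝕜 := ℝ) c M (n := 0)).continuous.comp
      (continuous_pi fun γ => (lp.evalCLM ℝ (fun _ : Γ => ℝ) ∞ γ).continuous)
  have hU' : (fun y => lp.updateFinset c M fun γ : M => y γ) ⁻¹' U ∈ 𝓝 c :=
    hcont.continuousAt.preimage_mem_nhds (by rwa [lp.updateFinset_self])
  refine ⟨M, ?_⟩
  filter_upwards [hU, hU'] with y hy hy'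
  simp_rw [hg y hy, hg _ hy', lp.updateFinset_apply_mem]

theorem contDiff_comp_of_LFC_general {Γ : Type*} {X : Type*} [NormedAddCommGroup X]
    [NormedSpace ℝ X] (k : ℕ∞)
    (h : X → lp (fun _ : Γ => ℝ) ∞) (hcont : Continuous h)
    (hcoord : ∀ γ : Γ, ContDiff ℝ (k : WithTop ℕ∞) fun x => h x γ)
    (f : lp (fun _ : Γ => ℝ) ∞ → ℝ) (hf : ContDiff ℝ (k : WithTop ℕ∞) f)
    (hLFC : ∀ x, LFCAt f x) :
    ContDiff ℝ (k : WithTop ℕ∞) (f ∘ h) := by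
  classical
  refine contDiff_iff_contDiffAt.mpr fun x => ?_
  obtain ⟨M, hM⟩ := (hLFC (h x)).exists_eventuallyEq_comp_updateFinset
  have hrestrict : ContDiff ℝ k fun y => fun γ : M => h y γ := contDiff_pi.mpr fun γ => hcoord γ
  exact (hf.comp ((lp.contDiff_updateFinset _ M).comp hrestrict)).contDiffAt.congr_of_eventuallyEq
    (hM.comp_tendsto hcont.continuousAt)

/-- **Hájek–Procházka, Lemma 2.3.** If `h : X → ℓ∞(Γ)` is continuous and coordinatewise
`C^k`-smooth, and `f : ℓ∞(Γ) → ℝ` is `C^k`-smooth and locally depends on finitely many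
coordinates everywhere, then `f ∘ h` is `C^k`-smooth. -/
theorem contDiff_comp_of_LFC {Γ : Type*} {X : Type*} [NormedAddCommGroup X]
    [NormedSpace ℝ X] [CompleteSpace X] (k : ℕ∞)
    (h : X → lp (fun _ : Γ => ℝ) ∞) (hcont : Continuous h)
    (hcoord : ∀ γ : Γ, ContDiff ℝ (k : WithTop ℕ∞) fun x => h x γ)
    (f : lp (fun _ : Γ => ℝ) ∞ → ℝ) (hf : ContDiff ℝ (k : WithTop ℕ∞) f)
    (hLFC : ∀ x, LFCAt f x) :
    ContDiff ℝ (k : WithTop ℕ∞) (f ∘ h) :=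
  contDiff_comp_of_LFC_general k h hcont hcoord f hf hLFC
end

section
/- Let X be a normed space, φ : X → ℝ a convex non-negative function, and x, x_r ∈ X for r ∈ ℕ. Then the following are equivalent: (i) (φ²(x_r) + φ²(x))/2 − φ²((x + x_r)/2) → 0 as r → ∞; (ii) lim_r φ(x_r) = lim_r φ((x + x_r)/2) = φ(x). If moreover φ is positively homogeneous, these conditions are also equivalent to: (iii) 2φ²(x_r) + 2φ²(x) − φ²(x + x_r) → 0 as r → ∞. -/
/-!
Convexity puts `φ((x + x_r)/2)` below the mean `(φ(x_r) + φ(x))/2`, and for reals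
`(a² + c²)/2 - ((a + c)/2)² = ((a - c)/2)²`; so the quantity in (i) dominates
`((φ(x_r) - φ(x))/2)²`, which gives (i) ⇒ (ii), while (ii) ⇒ (i) is continuity.
Under positive homogeneity `φ(x + x_r) = 2 φ((x + x_r)/2)`, so the quantity in (iii)
is four times the one in (i).
-/

open Filter Topology

section RealSequences

variable {α : Type*} {l : Filter α}

theorem tendsto_of_tendsto_sq {f : α → ℝ} {c : ℝ} (hf : ∀ r, 0 ≤ f r) (hc : 0 ≤ c)
    (h : Tendsto (fun r => f r ^ 2) l (𝓝 (c ^ 2))) : Tendsto f l (𝓝 c) := by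
  simpa only [Real.sqrt_sq hc, Real.sqrt_sq (hf _)] using h.sqrt

theorem tendsto_of_tendsto_sub_sq_zero {f : α → ℝ} {c : ℝ}
    (h : Tendsto (fun r => (f r - c) ^ 2) l (𝓝 0)) : Tendsto f l (𝓝 c) := by
  rw [← tendsto_sub_nhds_zero_iff, tendsto_zero_iff_abs_tendsto_zero]
  refine tendsto_of_tendsto_sq (fun r => abs_nonneg _) le_rfl ?_
  simpa [sq_abs] using h

theorem tendsto_sq_mean_sub_sq_zero_iff {a m : α → ℝ} {c : ℝ} (hm : ∀ r, 0 ≤ m r) (hc : 0 ≤ c)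
    (hmid : ∀ r, m r ≤ (a r + c) / 2) :
    Tendsto (fun r => (a r ^ 2 + c ^ 2) / 2 - m r ^ 2) l (𝓝 0) ↔
      Tendsto a l (𝓝 c) ∧ Tendsto m l (𝓝 c) := by
  constructor
  · intro hgap
    have hdev : ∀ r, (a r - c) ^ 2 ≤ 4 * ((a r ^ 2 + c ^ 2) / 2 - m r ^ 2) := fun r => by
      nlinarith [mul_le_mul (hmid r) (hmid r) (hm r) ((hm r).trans (hmid r))]
    have ha : Tendsto a l (𝓝 c) := tendsto_of_tendsto_sub_sq_zero <|
      squeeze_zero (fun r => sq_nonneg _) hdev (by simpa using hgap.const_mul 4)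
    have hm_sq : Tendsto (fun r => m r ^ 2) l (𝓝 (c ^ 2)) := by
      have := (((ha.pow 2).add_const (c ^ 2)).div_const 2).sub hgap
      rw [add_self_div_two, sub_zero] at this
      exact this.congr fun r => by ring
    exact ⟨ha, tendsto_of_tendsto_sq hm hc hm_sq⟩
  · rintro ⟨ha, hm⟩
    have := (((ha.pow 2).add_const (c ^ 2)).div_const 2).sub (hm.pow 2)
    rwa [add_self_div_two, sub_self] at this

end RealSequences

theorem ConvexOn.map_inv_two_smul_add_le {E : Type*} [AddCommGroup E] [Module ℝ E] {s : Set E}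
    {f : E → ℝ} (hf : ConvexOn ℝ s f) {x y : E} (hx : x ∈ s) (hy : y ∈ s) :
    f ((2 : ℝ)⁻¹ • (x + y)) ≤ (f x + f y) / 2 := by
  have := hf.2 hx hy (by norm_num : (0 : ℝ) ≤ 2⁻¹) (by norm_num : (0 : ℝ) ≤ 2⁻¹) (by norm_num)
  simp only [smul_eq_mul] at this
  rw [smul_add]
  linarith

/-- **Hájek–Procházka, Lemma 2.5.** For a convex non-negative function `φ` on a normed
space: (i) `(φ(x_r)² + φ(x)²)/2 - φ((x+x_r)/2)² → 0` iff (ii) `φ(x_r) → φ(x)` and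
`φ((x+x_r)/2) → φ(x)`; and if `φ` is positively homogeneous, these are also equivalent to
(iii) `2φ(x_r)² + 2φ(x)² - φ(x+x_r)² → 0`. -/
theorem convex_square_LUR_equivalences {X : Type*} [NormedAddCommGroup X] [NormedSpace ℝ X]
    (φ : X → ℝ) (hconv : ConvexOn ℝ Set.univ φ) (hnn : ∀ x, 0 ≤ φ x)
    (x : X) (xr : ℕ → X) :
    (Tendsto (fun r => (φ (xr r) ^ 2 + φ x ^ 2) / 2 - φ ((2 : ℝ)⁻¹ • (x + xr r)) ^ 2)
        atTop (𝓝 0) ↔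
      (Tendsto (fun r => φ (xr r)) atTop (𝓝 (φ x)) ∧
        Tendsto (fun r => φ ((2 : ℝ)⁻¹ • (x + xr r))) atTop (𝓝 (φ x)))) ∧
    ((∀ (t : ℝ), 0 ≤ t → ∀ y : X, φ (t • y) = t * φ y) →
      (Tendsto (fun r => (φ (xr r) ^ 2 + φ x ^ 2) / 2 - φ ((2 : ℝ)⁻¹ • (x + xr r)) ^ 2)
          atTop (𝓝 0) ↔
        Tendsto (fun r => 2 * φ (xr r) ^ 2 + 2 * φ x ^ 2 - φ (x + xr r) ^ 2) atTop (𝓝 0))) := by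
  refine ⟨tendsto_sq_mean_sub_sq_zero_iff (fun r => hnn _) (hnn x) fun r =>
    (hconv.map_inv_two_smul_add_le trivial trivial).trans_eq (by ring), fun hhom => ?_⟩
  have hdouble : ∀ r, φ (x + xr r) = 2 * φ ((2 : ℝ)⁻¹ • (x + xr r)) := fun r => by
    rw [← hhom 2 zero_le_two, smul_inv_smul₀ two_ne_zero]
  refine (tendsto_const_smul_iff₀ (c := (4 : ℝ)) four_ne_zero).symm.trans ?_
  rw [smul_zero]
  exact tendsto_congr fun r => by rw [smul_eq_mul, hdouble r]; ring
end

section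
/- Let f, g : ℝ → ℝ be twice differentiable, convex, non-negative functions, and define F : ℝ² → ℝ by F(x,y) := f(x)g(y). If (f'(x))²(g'(y))² ≤ f''(x) f(x) g''(y) g(y) for all (x,y) ∈ ℝ², then F is convex on ℝ². -/
/-!
Convexity of `F` on the plane reduces to convexity of its restrictions `φ(t) = f(X t) g(Y t)`
to lines, where `X`, `Y` are affine with slopes `u`, `v`. By Leibniz,
`φ'' = A + 2B + C` with `A = f''(X) u² g(Y)`, `B = f'(X) u g'(Y) v`, `C = f(X) g''(Y) v²`.
Convexity and non-negativity of `f`, `g` give `A, C ≥ 0`, and the hypothesis, multiplied by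
`(uv)²`, is `B² ≤ AC`; hence `A + C ≥ 2√(AC) ≥ 2|B|` and `φ'' ≥ 0`.
-/

open Set AffineMap

theorem ConvexOn.nonneg_of_hasDerivAt2 {f f' f'' : ℝ → ℝ} {x : ℝ} (hf : ConvexOn ℝ univ f)
    (hf' : ∀ y, HasDerivAt f (f' y) y) (hf'' : HasDerivAt f' (f'' x) x) : 0 ≤ f'' x := by
  have hmono : Monotone f' := by
    have := hf.monotoneOn_deriv fun y _ => (hf' y).differentiableAt
    rw [funext fun y => (hf' y).deriv] at this
    exact fun a b hab => this (mem_univ a) (mem_univ b) hab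
  simpa [hf''.deriv] using hmono.deriv_nonneg (x := x)

theorem convexOn_univ_of_hasDerivAt2_nonneg {f f' f'' : ℝ → ℝ}
    (hf' : ∀ x, HasDerivAt f (f' x) x) (hf'' : ∀ x, HasDerivAt f' (f'' x) x)
    (hf''₀ : ∀ x, 0 ≤ f'' x) : ConvexOn ℝ univ f :=
  convexOn_of_hasDerivWithinAt2_nonneg convex_univ
    (fun x _ => (hf' x).continuousAt.continuousWithinAt)
    (fun x _ => (hf' x).hasDerivWithinAt) (fun x _ => (hf'' x).hasDerivWithinAt)
    (fun x _ => hf''₀ x)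

theorem convexOn_univ_of_forall_convexOn_lineMap {𝕜 E β : Type*} [Field 𝕜] [LinearOrder 𝕜]
    [IsStrictOrderedRing 𝕜] [AddCommGroup E] [Module 𝕜 E] [AddCommMonoid β] [PartialOrder β]
    [SMul 𝕜 β] {φ : E → β} (h : ∀ p q : E, ConvexOn 𝕜 univ fun t : 𝕜 => φ (lineMap p q t)) :
    ConvexOn 𝕜 univ φ := by
  refine ⟨convex_univ, fun p _ q _ a b ha hb hab => ?_⟩
  have := (h p q).2 (mem_univ 0) (mem_univ 1) ha hb hab
  simp only [smul_eq_mul, mul_zero, mul_one, zero_add, lineMap_apply_zero,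
    lineMap_apply_one] at this
  rwa [lineMap_apply_module, ← hab, add_sub_cancel_right] at this

theorem HasDerivAt.hasDerivAt2_mul {F F' G G' : ℝ → ℝ} {F'' G'' t : ℝ}
    (hF : HasDerivAt F (F' t) t) (hF' : HasDerivAt F' F'' t)
    (hG : HasDerivAt G (G' t) t) (hG' : HasDerivAt G' G'' t) :
    HasDerivAt (fun s => F' s * G s + F s * G' s)
      (F'' * G t + 2 * (F' t * G' t) + F t * G'') t :=
  ((hF'.mul hG).add (hF.mul hG')).congr_deriv (by ring)

theorem add_two_mul_add_nonneg_of_sq_le_mul {a b c : ℝ} (ha : 0 ≤ a) (hc : 0 ≤ c)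
    (hb : b ^ 2 ≤ a * c) : 0 ≤ a + 2 * b + c := by
  nlinarith [sq_nonneg (a - c), sq_nonneg (a + c + 2 * b)]

/-- **Hájek–Procházka, Lemma 2.6.** If `f, g` are twice differentiable, convex,
non-negative real functions and `(f'(x))²(g'(y))² ≤ f''(x) f(x) g''(y) g(y)` for all
`(x, y)`, then `F(x, y) = f(x) g(y)` is convex on `ℝ²`. -/
theorem convexOn_mul_of_discriminant {f g f' f'' g' g'' : ℝ → ℝ}
    (hf1 : ∀ x, HasDerivAt f (f' x) x) (hf2 : ∀ x, HasDerivAt f' (f'' x) x)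
    (hg1 : ∀ x, HasDerivAt g (g' x) x) (hg2 : ∀ x, HasDerivAt g' (g'' x) x)
    (hfconv : ConvexOn ℝ Set.univ f) (hgconv : ConvexOn ℝ Set.univ g)
    (hfnn : ∀ x, 0 ≤ f x) (hgnn : ∀ x, 0 ≤ g x)
    (h : ∀ x y : ℝ, (f' x) ^ 2 * (g' y) ^ 2 ≤ f'' x * f x * (g'' y * g y)) :
    ConvexOn ℝ Set.univ (fun p : ℝ × ℝ => f p.1 * g p.2) := by
  refine convexOn_univ_of_forall_convexOn_lineMap fun p q => ?_
  simp only [fst_lineMap, snd_lineMap]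
  set X := lineMap (k := ℝ) p.1 q.1
  set Y := lineMap (k := ℝ) p.2 q.2
  set u := q.1 - p.1
  set v := q.2 - p.2
  have hF1 t : HasDerivAt (fun s => f (X s)) (f' (X t) * u) t :=
    (hf1 _).comp t hasDerivAt_lineMap
  have hF2 t : HasDerivAt (fun s => f' (X s) * u) (f'' (X t) * u * u) t :=
    ((hf2 _).comp t hasDerivAt_lineMap).mul_const u
  have hG1 t : HasDerivAt (fun s => g (Y s)) (g' (Y t) * v) t :=
    (hg1 _).comp t hasDerivAt_lineMap
  have hG2 t : HasDerivAt (fun s => g' (Y s) * v) (g'' (Y t) * v * v) t :=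
    ((hg2 _).comp t hasDerivAt_lineMap).mul_const v
  refine convexOn_univ_of_hasDerivAt2_nonneg (fun t => (hF1 t).mul (hG1 t))
    (fun t => (hF1 t).hasDerivAt2_mul (hF2 t) (hG1 t) (hG2 t)) fun t => ?_
  have hf'' := hfconv.nonneg_of_hasDerivAt2 hf1 (hf2 (X t))
  have hg'' := hgconv.nonneg_of_hasDerivAt2 hg1 (hg2 (Y t))
  refine add_two_mul_add_nonneg_of_sq_le_mul ?_ ?_ ?_
  · nlinarith [mul_nonneg (mul_nonneg hf'' (mul_self_nonneg u)) (hgnn (Y t))]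
  · nlinarith [mul_nonneg (mul_nonneg hg'' (mul_self_nonneg v)) (hfnn (X t))]
  · calc (f' (X t) * u * (g' (Y t) * v)) ^ 2
        = f' (X t) ^ 2 * g' (Y t) ^ 2 * (u * v) ^ 2 := by ring
      _ ≤ f'' (X t) * f (X t) * (g'' (Y t) * g (Y t)) * (u * v) ^ 2 :=
        mul_le_mul_of_nonneg_right (h _ _) (sq_nonneg _)
      _ = f'' (X t) * u * u * g (Y t) * (f (X t) * (g'' (Y t) * v * v)) := by ring
end

section
/- Let C ≥ 1. There exist: a decreasing sequence of positive reals δ_n ↘ 0 with δ_1 < 2C; a decreasing sequence of positive reals ρ_n ↘ 0; positive reals κ_{n,m} such that for each n the sequence (κ_{n,m})_m is decreasing with κ_{n,m} → 0 as m → ∞ and ρ_n > 2κ_{n,m} for all n,m; and an equi-Lipschitz system of non-negative, C^∞-smooth, convex functions g_{n,m,l} : 𝒟_{n,l} → [0,1], for n,m ∈ ℕ and l = 1,…,n, where 𝒟_{n,l} := [0, 2nC − δ_n(n−l)] × [0, 1+2nC], satisfying: (A1) g_{n,m,l}(t,s) = 0 iff (t,s) ∈ 𝒩_{n,l} := [0,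 lδ_n] × [0, 1+2nC]; (A2) for l < n, g_{n,m,l}(t,s) ≥ g_{n,m,l+1}(t,s) + ρ_n whenever (t,s) ∈ 𝒟_{n,l} \ 𝒩_{n,l+1}; (A3) if (t,0) ∈ 𝒟_{n,l} \ 𝒩_{n,l}, then s ↦ g_{n,m,l}(t,s) is increasing on [0,1+2nC] and g_{n,m,l}(t,1+2nC) − g_{n,m,l}(t,0) ≤ κ_{n,m}; (A4) if (t,0) ∈ 𝒟_{n,l} then g_{n,m,l}(t,0) = g_{n,m+1,l}(t,0); (A5) for l < n and all (t,s) ∈ 𝒟_{n,l} \ 𝒩_{n,l}, g_{n,m,l}(t,s) < g_{n,m,l+1}(t+r,s) whenever r > δ_n and (t+r,s) ∈ 𝒟_{n,l+1}; (A6) if (t,s) ∈ 𝒟_{n,l} \ 𝒩_{n,l}, (t_r,s_r) ∈ 𝒟_{n,l}, t_r → t and g_{n,m,l}(t_r,s_r) → g_{n,m,l}(t,s), then s_r → s; (A7) the map (t,s) ↦ g_{n,m,l}(|t|,|s|) is monotone in each variable on 𝒟_{n,l}, i.e. g_{n,m,l}(t,s) ≤ g_{n,m,l}(t',s') whenever 0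 ≤ t ≤ t' and 0 ≤ s ≤ s' with (t',s') ∈ 𝒟_{n,l}. -/
/-!
Take `δ_n = 1/(n+1)` and `g_{n,m,l}(t, s) = c_n K_{n,m} v(t - l δ_n) / (K_{n,m} - s)`, where
`v = u²` with `u x = x · exp (-1/x)` for `x > 0` and `u = 0` on `(-∞, 0]`: `v` is smooth, convex,
vanishes exactly on `(-∞, 0]` and is strictly increasing on `[0, ∞)`.

Joint convexity of `g` comes from that of `(x, y) ↦ u(x)² / y` for convex `u ≥ 0` (Cauchy–Schwarz).
The zero set of `g` is `t ≤ l δ_n`, which gives (A1), and raising `l` by one shifts the argument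
of `v` by `δ_n`; since `v` is convex with `v 0 = 0` it is superadditive, so the drop in (A2) is at
least `c_n v(δ_n) =: ρ_n`. At `s = 0` the factor `K / (K - s)` is `1`, so
`g(t, 0) = c_n v(t - l δ_n)` does not depend on `m` (A4), and a large `K_{n,m}` makes the whole
variation in `s` at most `κ_{n,m}` (A3). The normalisation `c_n` keeps the values in `[0, 1]` and
both partial Lipschitz constants at most `1`.
-/

open Filter Topology Set

/-- The domain `𝒟_{n,l} = [0, 2nC - δ_n (n - l)] × [0, 1 + 2nC]`. -/
def gDom (C : ℝ) (δ : ℕ → ℝ) (n l : ℕ) : Set (ℝ × ℝ) :=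
  Set.Icc (0 : ℝ) (2 * n * C - δ n * ((n : ℝ) - l)) ×ˢ Set.Icc (0 : ℝ) (1 + 2 * n * C)

/-- The null set `𝒩_{n,l} = [0, l δ_n] × [0, 1 + 2nC]`. -/
def gNull (C : ℝ) (δ : ℕ → ℝ) (n l : ℕ) : Set (ℝ × ℝ) :=
  Set.Icc (0 : ℝ) ((l : ℝ) * δ n) ×ˢ Set.Icc (0 : ℝ) (1 + 2 * n * C)

theorem ConvexOn.sq_div {E : Type*} [AddCommGroup E] [Module ℝ E] {s : Set E} {f : E → ℝ}
    (hf : ConvexOn ℝ s f) (hf₀ : ∀ x ∈ s, 0 ≤ f x) :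
    ConvexOn ℝ (s ×ˢ Ioi 0) (fun p => f p.1 ^ 2 / p.2) := by
  refine ⟨hf.1.prod (convex_Ioi 0), ?_⟩
  rintro ⟨x₁, y₁⟩ ⟨hx₁, hy₁ : 0 < y₁⟩ ⟨x₂, y₂⟩ ⟨hx₂, hy₂ : 0 < y₂⟩ a b ha hb hab
  simp only [Prod.smul_mk, Prod.mk_add_mk, smul_eq_mul]
  have hy : 0 < a * y₁ + b * y₂ := by
    rcases ha.eq_or_lt with rfl | ha'
    · simp_all
    · positivity
  have hsq : f (a • x₁ + b • x₂) ^ 2 ≤ (a * f x₁ + b * f x₂) ^ 2 :=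
    pow_le_pow_left₀ (hf₀ _ (hf.1 hx₁ hx₂ ha hb hab)) (hf.2 hx₁ hx₂ ha hb hab) 2
  have hcs : (a * f x₁ + b * f x₂) ^ 2 / (a * y₁ + b * y₂)
      ≤ a * (f x₁ ^ 2 / y₁) + b * (f x₂ ^ 2 / y₂) := by
    have gap : (a * (f x₁ ^ 2 / y₁) + b * (f x₂ ^ 2 / y₂)) * (a * y₁ + b * y₂)
        - (a * f x₁ + b * f x₂) ^ 2 = a * b * ((f x₁ * y₂ - f x₂ * y₁) ^ 2 / (y₁ * y₂)) := by
      field_simp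
      ring
    rw [div_le_iff₀ hy, ← sub_nonneg, gap]
    positivity
  exact (div_le_div_of_nonneg_right hsq hy.le).trans hcs

theorem ConvexOn.add_le_of_map_zero {f : ℝ → ℝ} (hf : ConvexOn ℝ (Ici 0) f) (h₀ : f 0 = 0)
    {a b : ℝ} (ha : 0 ≤ a) (hb : 0 ≤ b) : f a + f b ≤ f (a + b) := by
  rcases (add_nonneg ha hb).eq_or_lt with hab | hab
  · obtain ⟨rfl, rfl⟩ : a = 0 ∧ b = 0 := ⟨by linarith, by linarith⟩
    simp [h₀]
  have key : ∀ x, 0 ≤ x → x ≤ a + b → f x ≤ x / (a + b) * f (a + b) := by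
    intro x hx hxab
    have := hf.2 self_mem_Ici (mem_Ici.2 hab.le)
      (by rw [sub_nonneg, div_le_one hab]; exact hxab) (by positivity)
      (sub_add_cancel 1 (x / (a + b)))
    simpa [h₀, div_mul_cancel₀ x hab.ne'] using this
  have h := add_le_add (key a ha (by linarith)) (key b hb (by linarith))
  rwa [← add_mul, ← add_div, div_self hab.ne', one_mul] at h

theorem ConvexOn.abs_sub_le_mul_abs_sub {f : ℝ → ℝ} (hf : ConvexOn ℝ univ f) (hmono : Monotone f)
    {M x y : ℝ} (hx : x ≤ M) (hy : y ≤ M) : |f x - f y| ≤ (f (M + 1) - f M) * |x - y| := by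
  wlog hxy : x ≤ y generalizing x y
  · rw [abs_sub_comm, abs_sub_comm x]; exact this hy hx (le_of_not_ge hxy)
  rw [abs_sub_comm, abs_of_nonneg (sub_nonneg.2 (hmono hxy)), abs_sub_comm,
    abs_of_nonneg (sub_nonneg.2 hxy)]
  rcases hxy.eq_or_lt with rfl | hxy
  · simp
  have h₁ := hf.slope_mono_adjacent (mem_univ x) (mem_univ (M + 1)) hxy (by linarith)
  have h₂ := hf.secant_mono (a := M + 1) (mem_univ _) (mem_univ y) (mem_univ M) (by linarith)
    (by linarith) hy
  rw [div_le_iff₀ (sub_pos.2 hxy)] at h₁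
  rw [← neg_div_neg_eq, neg_sub, neg_sub] at h₂
  have h₃ : (f (M + 1) - f y) / (M + 1 - y) ≤ f (M + 1) - f M := by simpa [div_neg] using h₂
  nlinarith

theorem LipschitzOnWith.uncurry {α β γ : Type*} [PseudoEMetricSpace α] [PseudoEMetricSpace β]
    [PseudoEMetricSpace γ] {f : α → β → γ} {s : Set α} {t : Set β} {Kα Kβ : NNReal}
    (hα : ∀ b ∈ t, LipschitzOnWith Kα (fun a => f a b) s)
    (hβ : ∀ a ∈ s, LipschitzOnWith Kβ (f a) t) :
    LipschitzOnWith (Kα + Kβ) (Function.uncurry f) (s ×ˢ t) := by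
  rintro ⟨a₁, b₁⟩ ⟨ha₁, hb₁⟩ ⟨a₂, b₂⟩ ⟨ha₂, hb₂⟩
  simp only [Function.uncurry, ENNReal.coe_add, add_mul]
  apply le_trans (edist_triangle _ (f a₂ b₁) _)
  exact add_le_add (le_trans (hα _ hb₁ ha₁ ha₂) <| mul_right_mono <| le_max_left _ _)
      (le_trans (hβ _ ha₂ hb₁ hb₂) <| mul_right_mono <| le_max_right _ _)

noncomputable def smoothRamp (x : ℝ) : ℝ := x * expNegInvGlue x

theorem smoothRamp_of_nonpos {x : ℝ} (hx : x ≤ 0) : smoothRamp x = 0 := by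
  simp [smoothRamp, expNegInvGlue.zero_of_nonpos hx]

theorem smoothRamp_pos {x : ℝ} (hx : 0 < x) : 0 < smoothRamp x :=
  mul_pos hx (expNegInvGlue.pos_of_pos hx)

theorem smoothRamp_nonneg (x : ℝ) : 0 ≤ smoothRamp x := by
  rcases le_or_gt x 0 with hx | hx
  · exact (smoothRamp_of_nonpos hx).ge
  · exact (smoothRamp_pos hx).le

theorem contDiff_smoothRamp {n : ℕ∞} : ContDiff ℝ n smoothRamp :=
  contDiff_id.mul expNegInvGlue.contDiff

theorem strictMonoOn_smoothRamp : StrictMonoOn smoothRamp (Ici 0) := by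
  intro x (hx : 0 ≤ x) y (hy : 0 ≤ y) hxy
  rcases hx.eq_or_lt with rfl | hx
  · rw [smoothRamp_of_nonpos le_rfl]; exact smoothRamp_pos hxy
  · exact mul_lt_mul hxy (expNegInvGlue.monotone hxy.le) (expNegInvGlue.pos_of_pos hx) hy

theorem monotone_smoothRamp : Monotone smoothRamp := by
  intro x y hxy
  rcases le_or_gt x 0 with hx | hx
  · rw [smoothRamp_of_nonpos hx]; exact smoothRamp_nonneg y
  · exact strictMonoOn_smoothRamp.monotoneOn hx.le (hx.trans_le hxy).le hxy

theorem hasDerivAt_smoothRamp {x : ℝ} (hx : 0 < x) :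
    HasDerivAt smoothRamp (Real.exp (-x⁻¹) * (1 + x⁻¹)) x := by
  have hexp : HasDerivAt (fun y => y * Real.exp (-y⁻¹))
      (1 * Real.exp (-x⁻¹) + x * (Real.exp (-x⁻¹) * (x ^ 2)⁻¹)) x := by
    have := (hasDerivAt_inv hx.ne').neg.exp
    rw [neg_neg] at this
    exact (hasDerivAt_id x).mul this
  have heq : (fun y => y * Real.exp (-y⁻¹)) =ᶠ[𝓝 x] smoothRamp := by
    filter_upwards [eventually_gt_nhds hx] with y hy
    simp [smoothRamp, expNegInvGlue, not_le.2 hy]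
  refine (hexp.congr_of_eventuallyEq heq.symm).congr_deriv ?_
  field_simp

theorem convexOn_smoothRamp_Ici : ConvexOn ℝ (Ici 0) smoothRamp := by
  refine MonotoneOn.convexOn_of_deriv (convex_Ici 0)
    (contDiff_smoothRamp (n := 0)).continuous.continuousOn ?_ ?_ <;> rw [interior_Ici]
  · exact fun x hx => (hasDerivAt_smoothRamp hx).differentiableAt.differentiableWithinAt
  intro x (hx : 0 < x) y (hy : 0 < y) hxy
  rw [(hasDerivAt_smoothRamp hx).deriv, (hasDerivAt_smoothRamp hy).deriv]
  have hinv : y⁻¹ ≤ x⁻¹ := inv_anti₀ hx hxy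
  -- `1 + x⁻¹ ≤ (1 + y⁻¹) (1 + (x⁻¹ - y⁻¹)) ≤ (1 + y⁻¹) exp (x⁻¹ - y⁻¹)`
  have key : 1 + x⁻¹ ≤ (1 + y⁻¹) * Real.exp (x⁻¹ - y⁻¹) := by
    have := Real.add_one_le_exp (x⁻¹ - y⁻¹)
    nlinarith [inv_pos.2 hy]
  calc Real.exp (-x⁻¹) * (1 + x⁻¹)
      ≤ Real.exp (-x⁻¹) * ((1 + y⁻¹) * Real.exp (x⁻¹ - y⁻¹)) := by gcongr
    _ = Real.exp (-y⁻¹) * (1 + y⁻¹) := by rw [mul_left_comm, ← Real.exp_add]; ring_nf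

theorem convexOn_smoothRamp : ConvexOn ℝ univ smoothRamp := by
  have hmax : (fun x : ℝ => max x 0) '' univ = Ici 0 := by
    ext y
    simp only [image_univ, mem_range, mem_Ici]
    exact ⟨fun ⟨x, hx⟩ => hx ▸ le_max_right x 0, fun hy => ⟨y, max_eq_left hy⟩⟩
  have hcomp : smoothRamp ∘ (fun x : ℝ => max x 0) = smoothRamp := by
    ext x
    rcases le_or_gt x 0 with hx | hx
    · simp [max_eq_right hx, smoothRamp_of_nonpos hx, smoothRamp_of_nonpos le_rfl]
    · simp [max_eq_left hx.le]
  rw [← hcomp]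
  refine ConvexOn.comp ?_ (convexOn_id convex_univ |>.sup (convexOn_const 0 convex_univ)) ?_
  · rw [hmax]; exact convexOn_smoothRamp_Ici
  · rw [hmax]; exact monotone_smoothRamp.monotoneOn _

noncomputable def smoothRampSq (x : ℝ) : ℝ := smoothRamp x ^ 2

theorem smoothRampSq_nonneg (x : ℝ) : 0 ≤ smoothRampSq x := sq_nonneg _

theorem smoothRampSq_pos {x : ℝ} (hx : 0 < x) : 0 < smoothRampSq x :=
  pow_pos (smoothRamp_pos hx) 2

theorem smoothRampSq_eq_zero_iff {x : ℝ} : smoothRampSq x = 0 ↔ x ≤ 0 := by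
  refine ⟨fun h => not_lt.1 fun hx => (smoothRampSq_pos hx).ne' h, fun hx => ?_⟩
  simp [smoothRampSq, smoothRamp_of_nonpos hx]

theorem contDiff_smoothRampSq {n : ℕ∞} : ContDiff ℝ n smoothRampSq :=
  contDiff_smoothRamp.pow 2

theorem monotone_smoothRampSq : Monotone smoothRampSq := fun _ _ h =>
  pow_le_pow_left₀ (smoothRamp_nonneg _) (monotone_smoothRamp h) 2

theorem strictMonoOn_smoothRampSq : StrictMonoOn smoothRampSq (Ici 0) := fun x hx _ hy h =>
  pow_lt_pow_left₀ (strictMonoOn_smoothRamp hx hy h) (smoothRamp_nonneg x) two_ne_zero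

theorem convexOn_smoothRampSq : ConvexOn ℝ univ smoothRampSq :=
  convexOn_smoothRamp.pow (fun x _ => smoothRamp_nonneg x) 2

theorem convexOn_smoothRampSq_div :
    ConvexOn ℝ (univ ×ˢ Ioi 0) (fun p => smoothRampSq p.1 / p.2) :=
  convexOn_smoothRamp.sq_div fun x _ => smoothRamp_nonneg x

theorem lt_fst_of_mem_gDom_diff_gNull {C : ℝ} {δ : ℕ → ℝ} {n l l' : ℕ} {p : ℝ × ℝ}
    (hp : p ∈ gDom C δ n l \ gNull C δ n l') : l' * δ n < p.1 :=
  not_le.1 fun h => hp.2 ⟨⟨hp.1.1.1, h⟩, hp.1.2⟩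

namespace GSystem

noncomputable def δ (n : ℕ) : ℝ := ((n : ℝ) + 1)⁻¹

noncomputable def c (C : ℝ) (n : ℕ) : ℝ :=
  ((2 + 2 * n * C) ^ 2 * smoothRampSq (2 * n * C + 1))⁻¹

noncomputable def ρ (C : ℝ) (n : ℕ) : ℝ := c C n * smoothRampSq (δ n)

noncomputable def κ (C : ℝ) (n m : ℕ) : ℝ := ρ C n / (4 * ((m : ℝ) + 1))

noncomputable def K (C : ℝ) (n m : ℕ) : ℝ :=
  2 + 2 * n * C + c C n * smoothRampSq (2 * n * C) * (1 + 2 * n * C) / κ C n m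

noncomputable def g (C : ℝ) (n m l : ℕ) (t s : ℝ) : ℝ :=
  c C n * K C n m / (K C n m - s) * smoothRampSq (t - l * δ n)

theorem δ_pos (n : ℕ) : 0 < δ n := by unfold δ; positivity

theorem δ_one : δ 1 = 2⁻¹ := by norm_num [δ]

theorem δ_strictAnti : StrictAnti δ := fun m n h => by
  unfold δ
  gcongr

theorem tendsto_δ_atTop : Tendsto δ atTop (𝓝 0) := by
  unfold δ
  simpa [one_div] using (tendsto_one_div_add_atTop_nhds_zero_nat (𝕜 := ℝ))

variable {C : ℝ}

theorem c_pos (hC : 0 ≤ C) (n : ℕ) : 0 < c C n := by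
  have := smoothRampSq_pos (x := 2 * n * C + 1) (by positivity)
  unfold c
  positivity

theorem c_strictAnti (hC : 0 < C) : StrictAnti (c C) := fun m n h => by
  have hmn : (m : ℝ) < n := by exact_mod_cast h
  have hv := smoothRampSq_pos (x := 2 * m * C + 1) (by positivity)
  unfold c
  gcongr ?_⁻¹
  exact mul_lt_mul (by gcongr) (monotone_smoothRampSq (by gcongr)) hv (by positivity)

theorem ρ_pos (hC : 0 ≤ C) (n : ℕ) : 0 < ρ C n :=
  mul_pos (c_pos hC n) (smoothRampSq_pos (δ_pos n))

theorem ρ_strictAnti (hC : 0 < C) : StrictAnti (ρ C) := fun m n h =>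
  mul_lt_mul (c_strictAnti hC h)
    (monotone_smoothRampSq (δ_strictAnti h).le) (smoothRampSq_pos (δ_pos n)) (c_pos hC.le m).le

theorem tendsto_ρ_atTop (hC : 0 < C) : Tendsto (ρ C) atTop (𝓝 0) := by
  have hv : Tendsto (fun n => smoothRampSq (δ n)) atTop (𝓝 0) := by
    simpa [Function.comp_def, smoothRampSq_eq_zero_iff.2 le_rfl] using
      (contDiff_smoothRampSq (n := 0)).continuous.tendsto 0 |>.comp tendsto_δ_atTop
  refine squeeze_zero (fun n => (ρ_pos hC.le n).le) (fun n => ?_)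
    (by simpa using hv.const_mul (c C 0))
  exact mul_le_mul_of_nonneg_right ((c_strictAnti hC).antitone n.zero_le) (smoothRampSq_nonneg _)

theorem κ_pos (hC : 0 ≤ C) (n m : ℕ) : 0 < κ C n m := by
  have := ρ_pos hC n
  unfold κ
  positivity

theorem κ_strictAnti (hC : 0 ≤ C) (n : ℕ) : StrictAnti (κ C n) := fun k m h => by
  have := ρ_pos hC n
  unfold κ
  gcongr

theorem tendsto_κ_atTop (n : ℕ) : Tendsto (κ C n) atTop (𝓝 0) := by
  have := (tendsto_one_div_add_atTop_nhds_zero_nat (𝕜 := ℝ)).const_mul (ρ C n / 4)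
  rw [mul_zero] at this
  refine this.congr fun m => ?_
  rw [κ]
  field_simp

theorem two_mul_κ_lt_ρ (hC : 0 ≤ C) (n m : ℕ) : 2 * κ C n m < ρ C n := by
  have := ρ_pos hC n
  have hm : (0 : ℝ) ≤ m := m.cast_nonneg
  rw [κ, mul_div_assoc', div_lt_iff₀ (by positivity)]
  nlinarith

theorem one_le_K_sub (hC : 0 ≤ C) (n m : ℕ) {s : ℝ} (hs : s ≤ 1 + 2 * n * C) :
    1 ≤ K C n m - s := by
  have := κ_pos hC n m
  have := c_pos hC n
  have := smoothRampSq_nonneg (2 * n * C)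
  have : 0 ≤ c C n * smoothRampSq (2 * n * C) * (1 + 2 * n * C) / κ C n m := by positivity
  rw [K]
  linarith

theorem c_mul_K_div_pos (hC : 0 ≤ C) (n m : ℕ) {s : ℝ} (hs : s ≤ 1 + 2 * n * C) :
    0 < c C n * K C n m / (K C n m - s) := by
  have hKs := one_le_K_sub hC n m hs
  have hK := one_le_K_sub hC n m (s := 0) (by positivity)
  exact div_pos (mul_pos (c_pos hC n) (by linarith)) (by linarith)

theorem c_mul_K_div_mul_le_one (hC : 0 ≤ C) (n m : ℕ) {s : ℝ} (hs₀ : 0 ≤ s)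
    (hs : s ≤ 1 + 2 * n * C) :
    c C n * K C n m / (K C n m - s) * smoothRampSq (2 * n * C + 1) ≤ 1 := by
  have hKs := one_le_K_sub hC n m hs
  have hS : 0 ≤ 2 * n * C := by positivity
  have hv := smoothRampSq_pos (x := 2 * n * C + 1) (by positivity)
  have hratio : K C n m / (K C n m - s) ≤ 2 + 2 * n * C := by
    rw [div_le_iff₀ (by linarith)]
    nlinarith
  calc c C n * K C n m / (K C n m - s) * smoothRampSq (2 * n * C + 1)
      = c C n * smoothRampSq (2 * n * C + 1) * (K C n m / (K C n m - s)) := by ring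
    _ ≤ c C n * smoothRampSq (2 * n * C + 1) * (2 + 2 * n * C) := by
      have := c_pos hC n
      gcongr
    _ = 1 / (2 + 2 * n * C) := by
      rw [c]
      field_simp
    _ ≤ 1 := by rw [div_le_one (by positivity)]; linarith

theorem sub_le_of_mem_gDom {n l : ℕ} {p : ℝ × ℝ} (hp : p ∈ gDom C δ n l) :
    p.1 - l * δ n ≤ 2 * n * C := by
  have := hp.1.2
  have := mul_nonneg (δ_pos n).le n.cast_nonneg
  linarith

theorem g_zero (hC : 0 ≤ C) (n m l : ℕ) (t : ℝ) :
    g C n m l t 0 = c C n * smoothRampSq (t - l * δ n) := by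
  have := one_le_K_sub hC n m (s := 0) (by positivity)
  rw [g, sub_zero, mul_div_cancel_right₀ _ (by linarith)]

theorem g_mem_Icc (hC : 0 ≤ C) {n m l : ℕ} {p : ℝ × ℝ} (hp : p ∈ gDom C δ n l) :
    g C n m l p.1 p.2 ∈ Icc 0 1 := by
  have hamp := c_mul_K_div_pos hC n m hp.2.2
  refine ⟨mul_nonneg hamp.le (smoothRampSq_nonneg _), ?_⟩
  calc g C n m l p.1 p.2
      ≤ c C n * K C n m / (K C n m - p.2) * smoothRampSq (2 * n * C + 1) := by
        unfold g
        gcongr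
        exact monotone_smoothRampSq (by linarith [sub_le_of_mem_gDom hp])
    _ ≤ 1 := c_mul_K_div_mul_le_one hC n m hp.2.1 hp.2.2

theorem g_eq_zero_iff (hC : 0 ≤ C) {n m l : ℕ} {p : ℝ × ℝ} (hp : p ∈ gDom C δ n l) :
    g C n m l p.1 p.2 = 0 ↔ p ∈ gNull C δ n l := by
  rw [g, mul_eq_zero, or_iff_right (c_mul_K_div_pos hC n m hp.2.2).ne', smoothRampSq_eq_zero_iff,
    sub_nonpos]
  exact ⟨fun h => ⟨⟨hp.1.1, h⟩, hp.2⟩, fun h => h.1.2⟩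

theorem g_succ_add_ρ_le (hC : 0 ≤ C) {n m l : ℕ} {p : ℝ × ℝ}
    (hp : p ∈ gDom C δ n l \ gNull C δ n (l + 1)) :
    g C n m (l + 1) p.1 p.2 + ρ C n ≤ g C n m l p.1 p.2 := by
  have hx := lt_fst_of_mem_gDom_diff_gNull hp
  push_cast at hx
  have hgap : smoothRampSq (δ n) + smoothRampSq (p.1 - (l + 1) * δ n)
      ≤ smoothRampSq (p.1 - l * δ n) := by
    convert (convexOn_smoothRampSq.subset (subset_univ _) (convex_Ici 0)).add_le_of_map_zero
      (smoothRampSq_eq_zero_iff.2 le_rfl) (δ_pos n).le (a := δ n) (b := p.1 - (l + 1) * δ n)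
      (by linarith) using 2
    ring
  have hamp : c C n ≤ c C n * K C n m / (K C n m - p.2) := by
    have hKs := one_le_K_sub hC n m hp.1.2.2
    rw [le_div_iff₀ (by linarith)]
    nlinarith [c_pos hC n, hp.1.2.1]
  calc g C n m (l + 1) p.1 p.2 + ρ C n
      ≤ g C n m (l + 1) p.1 p.2 + c C n * K C n m / (K C n m - p.2) * smoothRampSq (δ n) := by
        rw [ρ]
        gcongr
        exact smoothRampSq_nonneg _
    _ ≤ g C n m l p.1 p.2 := by
        rw [g, g, ← mul_add]
        push_cast
        gcongr
        · exact (c_mul_K_div_pos hC n m hp.1.2.2).le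
        · linarith

theorem strictMonoOn_g (hC : 0 ≤ C) {n m l : ℕ} {t : ℝ} (ht : l * δ n < t) :
    StrictMonoOn (fun s => g C n m l t s) (Icc 0 (1 + 2 * n * C)) := by
  intro s₁ _ s₂ hs₂ hs
  have hK := one_le_K_sub hC n m hs₂.2
  have hK₀ : 0 < K C n m := by linarith [hs₂.1]
  have := c_pos hC n
  have := smoothRampSq_pos (sub_pos.2 ht)
  simp only [g]
  gcongr

theorem g_sub_g_zero_le_κ (hC : 0 ≤ C) {n m l : ℕ} {t : ℝ} (ht : (t, 0) ∈ gDom C δ n l) :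
    g C n m l t (1 + 2 * n * C) - g C n m l t 0 ≤ κ C n m := by
  set S := 1 + 2 * n * C
  have hκ := κ_pos hC n m
  have hKS₁ := one_le_K_sub hC n m (le_refl S)
  have hK : K C n m ≠ 0 := by linarith [show 0 ≤ S by positivity]
  have hdiff : g C n m l t S - g C n m l t 0
      = c C n * smoothRampSq (t - l * δ n) * S / (K C n m - S) := by
    rw [g_zero hC, g]
    field_simp
    ring
  -- `K - S = 1 + E / κ` with `E = c v(2nC) S`, so `E / (K - S) ≤ κ`
  have hKS : K C n m - S = 1 + c C n * smoothRampSq (2 * n * C) * S / κ C n m := by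
    rw [K]; ring
  have hκE : κ C n m * (1 + c C n * smoothRampSq (2 * n * C) * S / κ C n m)
      = κ C n m + c C n * smoothRampSq (2 * n * C) * S := by
    field_simp
  rw [hdiff, div_le_iff₀ (by linarith), hKS, hκE]
  have hv : smoothRampSq (t - l * δ n) ≤ smoothRampSq (2 * n * C) :=
    monotone_smoothRampSq (sub_le_of_mem_gDom ht)
  have := mul_le_mul_of_nonneg_right (mul_le_mul_of_nonneg_left hv (c_pos hC n).le)
    (show 0 ≤ S by positivity)
  linarith

theorem g_lt_g_succ_add (hC : 0 ≤ C) {n m l : ℕ} {t s r : ℝ}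
    (hts : (t, s) ∈ gDom C δ n l \ gNull C δ n l) (hr : δ n < r) :
    g C n m l t s < g C n m (l + 1) (t + r) s := by
  have ht := lt_fst_of_mem_gDom_diff_gNull hts
  rw [g, g]
  gcongr
  · exact c_mul_K_div_pos hC n m hts.1.2.2
  · refine strictMonoOn_smoothRampSq (mem_Ici.2 (by linarith)) (mem_Ici.2 ?_) ?_ <;>
      push_cast <;> linarith

theorem g_le_g (hC : 0 ≤ C) {n m l : ℕ} {t t' s s' : ℝ} (ht : t ≤ t') (hs : s ≤ s')
    (hs' : s' ≤ 1 + 2 * n * C) : g C n m l t s ≤ g C n m l t' s' := by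
  have hK := one_le_K_sub hC n m hs'
  have hK₀ := one_le_K_sub hC n m (s := 0) (by positivity)
  rw [g, g]
  refine mul_le_mul ?_ (monotone_smoothRampSq (by linarith)) (smoothRampSq_nonneg _)
    (c_mul_K_div_pos hC n m hs').le
  exact div_le_div_of_nonneg_left (mul_nonneg (c_pos hC n).le (by linarith)) (by linarith)
    (by linarith)

theorem K_sub_div_g (hC : 0 ≤ C) {n m l : ℕ} {t s : ℝ} (ht : l * δ n < t)
    (hs : s ≤ 1 + 2 * n * C) :
    K C n m - c C n * K C n m * smoothRampSq (t - l * δ n) / g C n m l t s = s := by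
  have hK := one_le_K_sub hC n m hs
  have hK₀ : K C n m ≠ 0 := by linarith [one_le_K_sub hC n m (s := 0) (by positivity)]
  have := c_pos hC n
  have := smoothRampSq_pos (sub_pos.2 ht)
  rw [g]
  field_simp
  ring

theorem tendsto_of_tendsto_g (hC : 0 ≤ C) {n m l : ℕ} {t s : ℝ}
    (hts : (t, s) ∈ gDom C δ n l \ gNull C δ n l) {tr sr : ℕ → ℝ}
    (hmem : ∀ r, (tr r, sr r) ∈ gDom C δ n l) (htr : Tendsto tr atTop (𝓝 t))
    (hg : Tendsto (fun r => g C n m l (tr r) (sr r)) atTop (𝓝 (g C n m l t s))) :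
    Tendsto sr atTop (𝓝 s) := by
  have ht := lt_fst_of_mem_gDom_diff_gNull hts
  have hg₀ : g C n m l t s ≠ 0 := by
    rw [Ne, g_eq_zero_iff hC hts.1]
    exact hts.2
  have hv : Tendsto (fun r => smoothRampSq (tr r - l * δ n)) atTop
      (𝓝 (smoothRampSq (t - l * δ n))) :=
    (contDiff_smoothRampSq (n := 0)).continuous.tendsto _ |>.comp (htr.sub_const _)
  have hlim := tendsto_const_nhds (x := K C n m) |>.sub <|
    (hv.const_mul (c C n * K C n m)).div hg hg₀
  rw [K_sub_div_g hC ht hts.1.2.2] at hlim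
  refine hlim.congr' ?_
  filter_upwards [htr.eventually (eventually_gt_nhds ht)] with r hr
  exact K_sub_div_g hC hr (hmem r).2.2

theorem lipschitzOnWith_g (hC : 0 ≤ C) (n m l : ℕ) :
    LipschitzOnWith 2 (fun p : ℝ × ℝ => g C n m l p.1 p.2) (gDom C δ n l) := by
  set T := Icc 0 (2 * n * C - δ n * (n - l))
  set S := Icc 0 (1 + 2 * n * C)
  have hM (t : ℝ) (ht : t ∈ T) : t - l * δ n ≤ 2 * n * C :=
    sub_le_of_mem_gDom (p := (t, 0)) ⟨ht, by simp; positivity⟩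
  have hlip₁ : ∀ s ∈ S, LipschitzOnWith 1 (fun t => g C n m l t s) T := by
    refine fun s hs => LipschitzOnWith.mk_one fun t ht t' ht' => ?_
    have hamp := c_mul_K_div_pos hC n m hs.2
    have hlip := convexOn_smoothRampSq.abs_sub_le_mul_abs_sub monotone_smoothRampSq (hM t ht)
      (hM t' ht')
    rw [sub_sub_sub_cancel_right] at hlip
    rw [Real.dist_eq, Real.dist_eq, g, g, ← mul_sub, abs_mul, abs_of_pos hamp]
    calc c C n * K C n m / (K C n m - s)
          * |smoothRampSq (t - l * δ n) - smoothRampSq (t' - l * δ n)|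
        ≤ c C n * K C n m / (K C n m - s) * smoothRampSq (2 * n * C + 1) * |t - t'| := by
          rw [mul_assoc]
          gcongr
          exact hlip.trans (by gcongr; linarith [smoothRampSq_nonneg (2 * n * C)])
      _ ≤ |t - t'| :=
          mul_le_of_le_one_left (abs_nonneg _) (c_mul_K_div_mul_le_one hC n m hs.1 hs.2)
  have hlip₂ : ∀ t ∈ T, LipschitzOnWith 1 (g C n m l t) S := by
    refine fun t ht => LipschitzOnWith.mk_one fun s hs s' hs' => ?_
    have hamp := c_mul_K_div_pos hC n m hs.2
    have hKs := one_le_K_sub hC n m hs.2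
    have hKs' := one_le_K_sub hC n m hs'.2
    have hv := smoothRampSq_nonneg (t - l * δ n)
    have hdiff : g C n m l t s - g C n m l t s'
        = c C n * K C n m / (K C n m - s) * (smoothRampSq (t - l * δ n) / (K C n m - s'))
          * (s - s') := by
      rw [g, g]
      field_simp
      ring
    have hv' : smoothRampSq (t - l * δ n) / (K C n m - s') ≤ smoothRampSq (2 * n * C + 1) := by
      rw [div_le_iff₀ (by linarith)]
      have := monotone_smoothRampSq (show t - l * δ n ≤ 2 * n * C + 1 by linarith [hM t ht])
      nlinarith [smoothRampSq_nonneg (2 * n * C + 1)]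
    rw [Real.dist_eq, Real.dist_eq, hdiff, abs_mul, abs_of_nonneg (by positivity)]
    calc c C n * K C n m / (K C n m - s) * (smoothRampSq (t - l * δ n) / (K C n m - s'))
          * |s - s'|
        ≤ c C n * K C n m / (K C n m - s) * smoothRampSq (2 * n * C + 1) * |s - s'| := by
          gcongr
      _ ≤ |s - s'| :=
          mul_le_of_le_one_left (abs_nonneg _) (c_mul_K_div_mul_le_one hC n m hs.1 hs.2)
  rw [← one_add_one_eq_two]
  exact LipschitzOnWith.uncurry hlip₁ hlip₂

theorem contDiffOn_g (hC : 0 ≤ C) (n m l : ℕ) :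
    ContDiffOn ℝ ((⊤ : ℕ∞) : WithTop ℕ∞) (fun p : ℝ × ℝ => g C n m l p.1 p.2)
      (gDom C δ n l) := by
  refine ContDiffOn.mul ?_
    (contDiff_smoothRampSq.comp (contDiff_fst.sub contDiff_const)).contDiffOn
  refine contDiffOn_const.div (contDiff_const.sub contDiff_snd).contDiffOn fun p hp => ?_
  linarith [one_le_K_sub hC n m hp.2.2]

theorem convexOn_g (hC : 0 ≤ C) (n m l : ℕ) :
    ConvexOn ℝ (gDom C δ n l) (fun p : ℝ × ℝ => g C n m l p.1 p.2) := by
  -- `g = c K · φ ∘ A` with `φ (x, y) = v x / y` and the affine map `A (t, s) = (t - l δ, K - s)`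
  let A : ℝ × ℝ →ᵃ[ℝ] ℝ × ℝ := (LinearMap.prodMap LinearMap.id (-LinearMap.id)).toAffineMap +
    AffineMap.const ℝ (ℝ × ℝ) (-(l * δ n), K C n m)
  have hA (p : ℝ × ℝ) : A p = (p.1 - l * δ n, K C n m - p.2) := by
    simp only [A, AffineMap.coe_add, LinearMap.coe_toAffineMap, AffineMap.coe_const, Pi.add_apply,
      LinearMap.prodMap_apply, LinearMap.id_coe, id_eq, LinearMap.neg_apply, Function.const_apply,
      Prod.mk_add_mk]
    congr 1
    ring
  have hdom : gDom C δ n l ⊆ A ⁻¹' (univ ×ˢ Ioi 0) := fun p hp => by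
    simp only [mem_preimage, hA, mem_prod, mem_univ, mem_Ioi, sub_pos, true_and]
    linarith [one_le_K_sub hC n m hp.2.2]
  have hconv := ((convexOn_smoothRampSq_div.comp_affineMap A).subset hdom
    ((convex_Icc _ _).prod (convex_Icc _ _))).smul (c := c C n * K C n m) ?_
  · refine hconv.congr fun p _ => ?_
    simp only [Function.comp, hA, smul_eq_mul, g]
    ring
  · exact mul_nonneg (c_pos hC n).le (by linarith [one_le_K_sub hC n m (s := 0) (by positivity)])

end GSystem

/-- **Hájek–Procházka, Lemma 5.4.** There exist sequences `δ_n ↘ 0` (with `δ_1 < 2C`),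
`ρ_n ↘ 0`, numbers `κ_{n,m} > 0` decreasing to `0` in `m` with `ρ_n > 2κ_{n,m}`, and an
equi-Lipschitz system of non-negative, `C^∞`-smooth, `1`-bounded convex functions
`g_{n,m,l} : 𝒟_{n,l} → [0,1]` satisfying (A1)–(A7). -/
theorem exists_g_system (C : ℝ) (hC : 1 ≤ C) :
    ∃ (δ ρ : ℕ → ℝ) (κ : ℕ → ℕ → ℝ) (g : ℕ → ℕ → ℕ → ℝ → ℝ → ℝ) (L : NNReal),
      (∀ n, 0 < δ n) ∧ StrictAnti δ ∧ Tendsto δ atTop (𝓝 0) ∧ δ 1 < 2 * C ∧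
      (∀ n, 0 < ρ n) ∧ StrictAnti ρ ∧ Tendsto ρ atTop (𝓝 0) ∧
      (∀ n m, 0 < κ n m) ∧ (∀ n, StrictAnti (κ n)) ∧
      (∀ n, Tendsto (κ n) atTop (𝓝 0)) ∧
      (∀ n m, 2 * κ n m < ρ n) ∧
      (∀ n m l : ℕ, 1 ≤ l → l ≤ n →
        -- basic properties: equi-Lipschitz, `C^∞`-smooth, convex, values in `[0,1]`
        LipschitzOnWith L (fun p : ℝ × ℝ => g n m l p.1 p.2) (gDom C δ n l) ∧
        ContDiffOn ℝ ((⊤ : ℕ∞) : WithTop ℕ∞)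
          (fun p : ℝ × ℝ => g n m l p.1 p.2) (gDom C δ n l) ∧
        ConvexOn ℝ (gDom C δ n l) (fun p : ℝ × ℝ => g n m l p.1 p.2) ∧
        (∀ p ∈ gDom C δ n l, g n m l p.1 p.2 ∈ Set.Icc (0 : ℝ) 1) ∧
        -- (A1)
        (∀ p ∈ gDom C δ n l, (g n m l p.1 p.2 = 0 ↔ p ∈ gNull C δ n l)) ∧
        -- (A2)
        (l < n → ∀ p ∈ gDom C δ n l \ gNull C δ n (l + 1),
          g n m (l + 1) p.1 p.2 + ρ n ≤ g n m l p.1 p.2) ∧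
        -- (A3)
        (∀ t : ℝ, (t, (0 : ℝ)) ∈ gDom C δ n l \ gNull C δ n l →
          StrictMonoOn (fun s => g n m l t s) (Set.Icc (0 : ℝ) (1 + 2 * n * C)) ∧
          g n m l t (1 + 2 * n * C) - g n m l t 0 ≤ κ n m) ∧
        -- (A4)
        (∀ t : ℝ, (t, (0 : ℝ)) ∈ gDom C δ n l → g n m l t 0 = g n (m + 1) l t 0) ∧
        -- (A5)
        (l < n → ∀ t s r : ℝ, (t, s) ∈ gDom C δ n l \ gNull C δ n l → δ n < r →
          (t + r, s) ∈ gDom C δ n (l + 1) → g n m l t s < g n m (l + 1) (t + r) s) ∧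
        -- (A6)
        (∀ t s : ℝ, (t, s) ∈ gDom C δ n l \ gNull C δ n l → ∀ tr sr : ℕ → ℝ,
          (∀ r : ℕ, (tr r, sr r) ∈ gDom C δ n l) → Tendsto tr atTop (𝓝 t) →
          Tendsto (fun r => g n m l (tr r) (sr r)) atTop (𝓝 (g n m l t s)) →
          Tendsto sr atTop (𝓝 s)) ∧
        -- (A7)
        (∀ t s t' s' : ℝ, 0 ≤ t → t ≤ t' → 0 ≤ s → s ≤ s' →
          (t', s') ∈ gDom C δ n l → g n m l t s ≤ g n m l t' s')) := by
  have hC₀ : 0 ≤ C := by linarith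
  open GSystem in
  exact ⟨δ, ρ C, κ C, g C, 2, δ_pos, δ_strictAnti, tendsto_δ_atTop, by rw [δ_one]; linarith,
    ρ_pos hC₀, ρ_strictAnti (by linarith), tendsto_ρ_atTop (by linarith), κ_pos hC₀,
    κ_strictAnti hC₀, tendsto_κ_atTop, two_mul_κ_lt_ρ hC₀, fun n m l _ _ =>
    ⟨lipschitzOnWith_g hC₀ n m l, contDiffOn_g hC₀ n m l, convexOn_g hC₀ n m l,
      fun _ hp => g_mem_Icc hC₀ hp,
      fun _ hp => g_eq_zero_iff hC₀ hp,
      fun _ _ hp => g_succ_add_ρ_le hC₀ hp,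
      fun _ ht =>
        ⟨strictMonoOn_g hC₀ (lt_fst_of_mem_gDom_diff_gNull ht), g_sub_g_zero_le_κ hC₀ ht.1⟩,
      fun t _ => (g_zero hC₀ n m l t).trans (g_zero hC₀ n (m + 1) l t).symm,
      fun _ _ _ _ hts hr _ => g_lt_g_succ_add hC₀ hts hr,
      fun _ _ hts _ _ hmem htr hg => tendsto_of_tendsto_g hC₀ hts hmem htr hg,
      fun _ _ _ _ _ ht _ hs hdom => g_le_g hC₀ ht hs hdom.2.2⟩⟩
end

section
/- Let (X,‖·‖) be a Banach space, K ≥ 1, and let J̃, J̃_i : B → ℝ (i ∈ ℕ) be continuous convex non-negative functions on the open unit ball B of X with J̃(0) = 0. Let J (resp. J_i) be the Minkowski functional of {x ∈ X : J̃(x) ≤ 1/2} (resp. {x ∈ X : J̃_i(x) ≤ 1/2}), and assume these are equivalent norms on X satisfying 2‖x‖ ≤ J(x) ≤ 2K‖x‖ and 2‖x‖ ≤ J_i(x) ≤ 2K‖x‖ for all x ∈ X and all i. If J̃_i → J̃ uniformly on B, then J_i → J uniformly on bounded subsets of X. -/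
open Metric

/-!
If `|J̃ᵢ - J̃| ≤ δ / 4` on `B` with `δ ≤ 1`, convexity along the segment `[0, x]` shows that each of
the sublevel sets `{J̃ ≤ 1/2}`, `{J̃ᵢ ≤ 1/2}` lies in `(1 + δ)` times the other. For the gauges this
gives `Jᵢ ≤ (1 + δ) J` and `J ≤ (1 + δ) Jᵢ`, hence `|Jᵢ - J| ≤ 2KRδ` on the ball of radius `R`.
The two-sided norm bounds make the sublevel sets neighbourhoods of `0`, hence absorbent, which is
what monotonicity of the gauge under inclusion requires.
-/

open Set
open scoped Pointwise

section Gauge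

variable {E : Type*} [AddCommGroup E] [Module ℝ E] {s : Set E}

lemma mem_of_gauge_lt_one_of_pos {x : E} (hs : Convex ℝ s) (hs₀ : (0 : E) ∈ s)
    (hpos : 0 < gauge s x) (hlt : gauge s x < 1) : x ∈ s := by
  -- `sInf ∅ = 0`, so a positive gauge rules out an empty defining set.
  have hne : {r ∈ Ioi (0 : ℝ) | r⁻¹ • x ∈ s}.Nonempty := by
    rw [nonempty_iff_ne_empty]
    intro hempty
    rw [gauge_def', hempty, Real.sInf_empty] at hpos
    exact lt_irrefl 0 hpos
  rw [gauge_def'] at hlt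
  obtain ⟨r, ⟨hr₀ : 0 < r, hr⟩, hr₁⟩ := exists_lt_of_csInf_lt hne hlt
  simpa [smul_inv_smul₀ hr₀.ne'] using hs.smul_mem_of_zero_mem hs₀ hr ⟨hr₀.le, hr₁.le⟩

lemma gauge_le_mul_gauge_of_subset_smul {t : Set E} (hs : Absorbent ℝ s) {r : ℝ} (hr : 0 < r)
    (hst : s ⊆ r • t) (x : E) : gauge t x ≤ r * gauge s x := by
  have h := gauge_mono hs hst x
  rw [gauge_smul_left_of_nonneg hr.le, Pi.smul_apply, smul_eq_mul] at h
  rwa [inv_mul_le_iff₀ hr] at h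

end Gauge

section Sublevel

variable {E : Type*} [AddCommGroup E] [Module ℝ E] {s : Set E} {f g : E → ℝ} {t δ η : ℝ}

lemma inter_setOf_le_subset_smul (hs₀ : (0 : E) ∈ s) (hg : ConvexOn ℝ s g) (hδ : 0 ≤ δ)
    (hg₀ : g 0 ≤ η) (hgf : ∀ x ∈ s, g x ≤ f x + η) (hη : (1 + δ) * η ≤ δ * t) :
    s ∩ {x | f x ≤ t} ⊆ (1 + δ) • (s ∩ {x | g x ≤ t}) := by
  rintro x ⟨hxs, hfx⟩
  have h1δ : 0 < 1 + δ := by linarith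
  have hsum : δ / (1 + δ) + (1 + δ)⁻¹ = 1 := by field_simp; ring
  have hconv := hg.2 hs₀ hxs (div_nonneg hδ h1δ.le) (inv_nonneg.2 h1δ.le) hsum
  rw [smul_zero, zero_add] at hconv
  refine ⟨(1 + δ)⁻¹ • x, ⟨?_, ?_⟩, smul_inv_smul₀ h1δ.ne' x⟩
  · simpa using hg.1 hs₀ hxs (div_nonneg hδ h1δ.le) (inv_nonneg.2 h1δ.le) hsum
  · calc g ((1 + δ)⁻¹ • x) ≤ δ / (1 + δ) * g 0 + (1 + δ)⁻¹ * g x := hconv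
      _ ≤ δ / (1 + δ) * η + (1 + δ)⁻¹ * (t + η) := by
          gcongr
          linarith [hgf x hxs, show f x ≤ t from hfx]
      _ = (δ * η + t + η) / (1 + δ) := by field_simp; ring
      _ ≤ t := by rw [div_le_iff₀ h1δ]; linarith

lemma gauge_inter_setOf_le_le_mul (hs₀ : (0 : E) ∈ s) (hf : Absorbent ℝ (s ∩ {x | f x ≤ t}))
    (hg : ConvexOn ℝ s g) (hδ : 0 ≤ δ) (hg₀ : g 0 ≤ η) (hgf : ∀ x ∈ s, g x ≤ f x + η)
    (hη : (1 + δ) * η ≤ δ * t) (x : E) :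
    gauge (s ∩ {x | g x ≤ t}) x ≤ (1 + δ) * gauge (s ∩ {x | f x ≤ t}) x :=
  gauge_le_mul_gauge_of_subset_smul hf (by linarith)
    (inter_setOf_le_subset_smul hs₀ hg hδ hg₀ hgf hη) x

end Sublevel

lemma absorbent_of_gauge_le_mul_norm {X : Type*} [NormedAddCommGroup X] [NormedSpace ℝ X]
    {s : Set X} (hs : Convex ℝ s) (hs₀ : (0 : X) ∈ s) (hpos : ∀ x ≠ 0, 0 < gauge s x) {c : ℝ}
    (hc : 0 < c) (hle : ∀ x, gauge s x ≤ c * ‖x‖) : Absorbent ℝ s := by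
  refine absorbent_nhds_zero (Filter.mem_of_superset (ball_mem_nhds 0 (inv_pos.2 hc)) fun x hx ↦ ?_)
  rcases eq_or_ne x 0 with rfl | hx₀
  · exact hs₀
  refine mem_of_gauge_lt_one_of_pos hs hs₀ (hpos x hx₀) ((hle x).trans_lt ?_)
  rw [mem_ball_zero_iff] at hx
  calc c * ‖x‖ < c * c⁻¹ := by gcongr
    _ = 1 := mul_inv_cancel₀ hc.ne'

lemma abs_sub_le_of_le_one_add_mul {a b δ M : ℝ} (hδ : 0 ≤ δ) (ha : a ≤ (1 + δ) * b)
    (hb : b ≤ (1 + δ) * a) (haM : a ≤ M) (hbM : b ≤ M) : |a - b| ≤ δ * M := by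
  rw [abs_sub_le_iff]
  constructor <;> nlinarith

theorem gauge_approximation_general {X : Type*} [NormedAddCommGroup X] [NormedSpace ℝ X]
    (K : ℝ) (hK : 1 ≤ K)
    (Jt : X → ℝ) (Jti : ℕ → X → ℝ)
    (hJt_conv : ConvexOn ℝ (ball (0 : X) 1) Jt)
    (hJt_zero : Jt 0 = 0)
    (hJti_conv : ∀ i, ConvexOn ℝ (ball (0 : X) 1) (Jti i))
    (hJti_zero : ∀ i, Jti i 0 = 0)
    (hJ_equiv : ∀ x : X,
      2 * ‖x‖ ≤ gauge (ball (0 : X) 1 ∩ {y | Jt y ≤ 1 / 2}) x ∧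
      gauge (ball (0 : X) 1 ∩ {y | Jt y ≤ 1 / 2}) x ≤ 2 * K * ‖x‖)
    (hJi_equiv : ∀ (i : ℕ) (x : X),
      2 * ‖x‖ ≤ gauge (ball (0 : X) 1 ∩ {y | Jti i y ≤ 1 / 2}) x ∧
      gauge (ball (0 : X) 1 ∩ {y | Jti i y ≤ 1 / 2}) x ≤ 2 * K * ‖x‖)
    (hunif : ∀ ε > (0 : ℝ), ∃ i₀ : ℕ, ∀ i ≥ i₀, ∀ x ∈ ball (0 : X) 1,
      |Jti i x - Jt x| ≤ ε) :
    ∀ R > (0 : ℝ), ∀ ε > (0 : ℝ), ∃ i₀ : ℕ, ∀ i ≥ i₀, ∀ x : X, ‖x‖ ≤ R →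
      |gauge (ball (0 : X) 1 ∩ {y | Jti i y ≤ 1 / 2}) x -
        gauge (ball (0 : X) 1 ∩ {y | Jt y ≤ 1 / 2}) x| ≤ ε := by
  have h₀ : (0 : X) ∈ ball (0 : X) 1 := mem_ball_self one_pos
  have absorbent {F : X → ℝ} (hF : ConvexOn ℝ (ball (0 : X) 1) F) (hF₀ : F 0 = 0)
      (hF_equiv : ∀ x : X, 2 * ‖x‖ ≤ gauge (ball (0 : X) 1 ∩ {y | F y ≤ 1 / 2}) x ∧
        gauge (ball (0 : X) 1 ∩ {y | F y ≤ 1 / 2}) x ≤ 2 * K * ‖x‖) :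
      Absorbent ℝ (ball (0 : X) 1 ∩ {y | F y ≤ 1 / 2}) :=
    absorbent_of_gauge_le_mul_norm (hF.convex_le _) ⟨h₀, by norm_num [hF₀]⟩
      (fun x hx ↦ by linarith [(hF_equiv x).1, norm_pos_iff.2 hx]) (by linarith)
      fun x ↦ (hF_equiv x).2
  intro R hR ε hε
  set δ := min 1 (ε / (2 * K * R))
  have hδ : 0 < δ := lt_min one_pos (by positivity)
  have hδε : δ * (2 * K * R) ≤ ε :=
    (le_div_iff₀ (by positivity)).1 (min_le_right _ _)
  obtain ⟨i₀, hi₀⟩ := hunif (δ / 4) (by positivity)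
  have hη : (1 + δ) * (δ / 4) ≤ δ * (1 / 2) := by nlinarith [min_le_left 1 (ε / (2 * K * R))]
  refine ⟨i₀, fun i hi x hx ↦ (abs_sub_le_of_le_one_add_mul hδ.le ?_ ?_ ?_ ?_).trans hδε⟩
  · exact gauge_inter_setOf_le_le_mul h₀ (absorbent hJt_conv hJt_zero hJ_equiv) (hJti_conv i)
      hδ.le (by rw [hJti_zero]; positivity)
      (fun y hy ↦ by linarith [(abs_le.1 (hi₀ i hi y hy)).2]) hη x
  · exact gauge_inter_setOf_le_le_mul h₀ (absorbent (hJti_conv i) (hJti_zero i) (hJi_equiv i))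
      hJt_conv hδ.le (by rw [hJt_zero]; positivity)
      (fun y hy ↦ by linarith [(abs_le.1 (hi₀ i hi y hy)).1]) hη x
  · exact (hJi_equiv i x).2.trans (by gcongr)
  · exact (hJ_equiv x).2.trans (by gcongr)

/-- **Hájek–Procházka, Section 5 (final argument).** Let `J̃, J̃_i` be continuous convex
non-negative functions on the open unit ball `B` with `J̃ 0 = 0`, and let `J`, `J_i` be the
Minkowski functionals of `{x ∈ B : J̃ x ≤ 1/2}`, `{x ∈ B : J̃_i x ≤ 1/2}`; assume these are
equivalent norms with `2‖x‖ ≤ J x ≤ 2K‖x‖` and `2‖x‖ ≤ J_i x ≤ 2K‖x‖`. If `J̃_i → J̃`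
uniformly on `B`, then `J_i → J` uniformly on bounded sets. -/
theorem gauge_approximation {X : Type*} [NormedAddCommGroup X] [NormedSpace ℝ X]
    [CompleteSpace X] (K : ℝ) (hK : 1 ≤ K)
    (Jt : X → ℝ) (Jti : ℕ → X → ℝ)
    (hJt_cont : ContinuousOn Jt (ball (0 : X) 1))
    (hJt_conv : ConvexOn ℝ (ball (0 : X) 1) Jt)
    (hJt_nn : ∀ x ∈ ball (0 : X) 1, 0 ≤ Jt x)
    (hJt_zero : Jt 0 = 0)
    (hJti_cont : ∀ i, ContinuousOn (Jti i) (ball (0 : X) 1))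
    (hJti_conv : ∀ i, ConvexOn ℝ (ball (0 : X) 1) (Jti i))
    (hJti_nn : ∀ i, ∀ x ∈ ball (0 : X) 1, 0 ≤ Jti i x)
    (hJti_zero : ∀ i, Jti i 0 = 0)
    (hJ_equiv : ∀ x : X,
      2 * ‖x‖ ≤ gauge (ball (0 : X) 1 ∩ {y | Jt y ≤ 1 / 2}) x ∧
      gauge (ball (0 : X) 1 ∩ {y | Jt y ≤ 1 / 2}) x ≤ 2 * K * ‖x‖)
    (hJi_equiv : ∀ (i : ℕ) (x : X),
      2 * ‖x‖ ≤ gauge (ball (0 : X) 1 ∩ {y | Jti i y ≤ 1 / 2}) x ∧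
      gauge (ball (0 : X) 1 ∩ {y | Jti i y ≤ 1 / 2}) x ≤ 2 * K * ‖x‖)
    (hunif : ∀ ε > (0 : ℝ), ∃ i₀ : ℕ, ∀ i ≥ i₀, ∀ x ∈ ball (0 : X) 1,
      |Jti i x - Jt x| ≤ ε) :
    ∀ R > (0 : ℝ), ∀ ε > (0 : ℝ), ∃ i₀ : ℕ, ∀ i ≥ i₀, ∀ x : X, ‖x‖ ≤ R →
      |gauge (ball (0 : X) 1 ∩ {y | Jti i y ≤ 1 / 2}) x -
        gauge (ball (0 : X) 1 ∩ {y | Jt y ≤ 1 / 2}) x| ≤ ε :=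
  gauge_approximation_general K hK Jt Jti hJt_conv hJt_zero hJti_conv hJti_zero hJ_equiv hJi_equiv
    hunif
end
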